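/- arXiv:1811.05876 — 2 statements merged into one kernel-verified Lean document; each statement's English description precedes it below -/
import Mathlib

section
/- (Double quotient isomorphism theorem in a normal category) Let C be a normal category and K → A, L → A normal monomorphisms with K ⊆ L. Let f : A → A/K be the cokernel of K → A. Then f(L) ≅ L/K and A/L ≅ (A/K) / (L/K). -/
open CategoryTheory CategoryTheory.Limits

universe v u

namespace StarReg

variable {C : Type u} [Category.{v} C]

/-- An ideal of morphisms in the sense of Ehresmann. -/
def IsIdealClass (N : MorphismProperty C) : Prop :=
  (∀ ⦃X Y Z : C⦄ (f : X ⟶ Y) (g : Y ⟶ Z), N f → N (f ≫ g)) ∧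
  (∀ ⦃X Y Z : C⦄ (f : X ⟶ Y) (g : Y ⟶ Z), N g → N (f ≫ g))

/-- `k` is an `N`-kernel of `f`. -/
def IsNKernel (N : MorphismProperty C) {K X Y : C} (k : K ⟶ X) (f : X ⟶ Y) : Prop :=
  N (k ≫ f) ∧ ∀ ⦃L : C⦄ (g : L ⟶ X), N (g ≫ f) → ∃! μ : L ⟶ K, μ ≫ k = g

def HasNKernels (N : MorphismProperty C) : Prop :=
  ∀ ⦃X Y : C⦄ (f : X ⟶ Y), ∃ (K : C) (k : K ⟶ X), IsNKernel N k f

/-- Every morphism factors as a regular epimorphism followed by a monomorphism. -/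
def RegEpiMonoFactorisations (C : Type u) [Category.{v} C] : Prop :=
  ∀ ⦃X Y : C⦄ (f : X ⟶ Y), ∃ (Z : C) (e : X ⟶ Z) (m : Z ⟶ Y),
    Nonempty (RegularEpi e) ∧ Mono m ∧ e ≫ m = f

/-- Regular epimorphisms are stable under pullback. -/
def RegEpisPullbackStable (C : Type u) [Category.{v} C] : Prop :=
  ∀ ⦃P X Y Z : C⦄ (fst : P ⟶ X) (snd : P ⟶ Y) (f : X ⟶ Z) (g : Y ⟶ Z),
    IsPullback fst snd f g → Nonempty (RegularEpi g) → Nonempty (RegularEpi fst)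

/-- A star: a pair of parallel morphisms whose first component lies in `N`. -/
structure Star (N : MorphismProperty C) (X : C) where
  T : C
  a : T ⟶ X
  b : T ⟶ X
  ha : N a

/-- A monic star: the pair is jointly monomorphic. -/
def Star.Monic {N : MorphismProperty C} {X : C} (s : Star N X) : Prop :=
  ∀ ⦃W : C⦄ (u v : W ⟶ s.T), u ≫ s.a = v ≫ s.a → u ≫ s.b = v ≫ s.b → u = v

/-- `s` is the kernel star of `f`. -/
def IsKernelStar {N : MorphismProperty C} {X Y : C} (f : X ⟶ Y) (s : Star N X) : Prop :=
  s.a ≫ f = s.b ≫ f ∧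
  ∀ t : Star N X, t.a ≫ f = t.b ≫ f →
    ∃! u : t.T ⟶ s.T, u ≫ s.a = t.a ∧ u ≫ s.b = t.b

/-- `t` is the (regular epi, monic star) image of the star `s` along `f`. -/
def IsImageFact {N : MorphismProperty C} {X Y : C} (f : X ⟶ Y) (s : Star N X)
    (t : Star N Y) : Prop :=
  t.Monic ∧ ∃ e : s.T ⟶ t.T,
    Nonempty (RegularEpi e) ∧ e ≫ t.a = s.a ≫ f ∧ e ≫ t.b = s.b ≫ f

/-- `f` is a coequaliser of the star `s`. -/
def IsStarCoequalizer {N : MorphismProperty C} {X Q : C} (s : Star N X) (f : X ⟶ Q) : Prop :=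
  s.a ≫ f = s.b ≫ f ∧
  ∀ ⦃W : C⦄ (h : X ⟶ W), s.a ≫ h = s.b ≫ h → ∃! u : Q ⟶ W, f ≫ u = h

/-- `s` is the star `Δ*_X` of the discrete relation on `X`. -/
def IsDeltaStar {N : MorphismProperty C} {X : C} (s : Star N X) : Prop :=
  s.a = s.b ∧ IsNKernel N s.a (𝟙 X)

def RegEpisAreStarCoequalizers (N : MorphismProperty C) : Prop :=
  ∀ ⦃X Y : C⦄ (f : X ⟶ Y), Nonempty (RegularEpi f) →
    ∃ s : Star N X, IsStarCoequalizer s f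

/-- A star-regular category: regular multi-pointed with `N`-kernels, every regular
epimorphism a coequaliser of a star. -/
def StarRegular (N : MorphismProperty C) : Prop :=
  IsIdealClass N ∧ HasNKernels N ∧ RegEpiMonoFactorisations C ∧
    RegEpisPullbackStable C ∧ RegEpisAreStarCoequalizers N

def HasKernelStarCoequalizers (N : MorphismProperty C) : Prop :=
  ∀ ⦃X Y : C⦄ (f : X ⟶ Y) (s : Star N X), IsKernelStar f s →
    ∃ (Q : C) (q : X ⟶ Q), IsStarCoequalizer s q

/-- `f` is saturating: the image of `Δ*` along `f` is `Δ*`. -/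
def Saturating (N : MorphismProperty C) {X Y : C} (f : X ⟶ Y) : Prop :=
  ∀ (s : Star N X) (t : Star N Y), IsDeltaStar s → IsImageFact f s t → IsDeltaStar t

/-- The diamond `e ≫ g = f ≫ h` is right saturated: `f(E*) = H*`. -/
def RightSaturated (N : MorphismProperty C) {X Y Z W : C}
    (e : X ⟶ Z) (f : X ⟶ Y) (_g : Z ⟶ W) (h : Y ⟶ W) : Prop :=
  ∀ (s : Star N X) (t : Star N Y), IsKernelStar e s → IsImageFact f s t → IsKernelStar h t

/-- The diamond `e ≫ g = f ≫ h` is left saturated: `e(F*) = G*`. -/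
def LeftSaturated (N : MorphismProperty C) {X Y Z W : C}
    (e : X ⟶ Z) (f : X ⟶ Y) (g : Z ⟶ W) (_h : Y ⟶ W) : Prop :=
  ∀ (s : Star N X) (t : Star N Z), IsKernelStar f s → IsImageFact e s t → IsKernelStar g t

/-- `s` is a kernel star (of some morphism). -/
def IsAKernelStar {N : MorphismProperty C} {X : C} (s : Star N X) : Prop :=
  ∃ (W : C) (w : X ⟶ W), IsKernelStar w s

/-- Inclusion of stars on the same object. -/
def StarLE {N : MorphismProperty C} {X : C} (s t : Star N X) : Prop :=
  ∃ m : s.T ⟶ t.T, m ≫ t.a = s.a ∧ m ≫ t.b = s.b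

/-- Property (*): images along coequalisers of smaller kernel stars of kernel stars are
kernel stars. -/
def PropertyStar (N : MorphismProperty C) : Prop :=
  ∀ ⦃A Q : C⦄ (F G : Star N A) (f : A ⟶ Q),
    IsKernelStar f F → IsStarCoequalizer F f → IsAKernelStar G → StarLE F G →
    ∀ t : Star N Q, IsImageFact f G t → IsAKernelStar t

/-- `σ` (with comparison `j`) is the star-pullback of `τ` along `g`. -/
def IsStarPullback {N : MorphismProperty C} {X Y : C} (g : X ⟶ Y) (τ : Star N Y)
    (σ : Star N X) (j : σ.T ⟶ τ.T) : Prop :=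
  σ.a ≫ g = j ≫ τ.a ∧ σ.b ≫ g = j ≫ τ.b ∧
  ∀ (ρ : Star N X) (w : ρ.T ⟶ τ.T), ρ.a ≫ g = w ≫ τ.a → ρ.b ≫ g = w ≫ τ.b →
    ∃! h : ρ.T ⟶ σ.T, h ≫ σ.a = ρ.a ∧ h ≫ σ.b = ρ.b ∧ h ≫ j = w

def HasRegEpiPushouts (C : Type u) [Category.{v} C] : Prop :=
  ∀ ⦃X Y Z : C⦄ (f : X ⟶ Y) (g : X ⟶ Z), Nonempty (RegularEpi f) → Nonempty (RegularEpi g) →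
    ∃ (W : C) (p : Y ⟶ W) (q : Z ⟶ W), IsPushout f g p q

end StarReg

namespace PtReg

variable {C : Type u} [Category.{v} C] [HasZeroMorphisms C]

/-- `k` is a kernel of `f` in the pointed sense. -/
def IsPKernel {K X Y : C} (k : K ⟶ X) (f : X ⟶ Y) : Prop :=
  k ≫ f = 0 ∧ ∀ ⦃L : C⦄ (g : L ⟶ X), g ≫ f = 0 → ∃! u : L ⟶ K, u ≫ k = g

/-- `q` is a cokernel of `k` in the pointed sense. -/
def IsPCokernel {K X Q : C} (k : K ⟶ X) (q : X ⟶ Q) : Prop :=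
  k ≫ q = 0 ∧ ∀ ⦃W : C⦄ (h : X ⟶ W), k ≫ h = 0 → ∃! u : Q ⟶ W, q ≫ u = h

/-- A normal monomorphism: a kernel of some morphism. -/
def IsNormalMonoP {K X : C} (k : K ⟶ X) : Prop :=
  ∃ (Y : C) (f : X ⟶ Y), IsPKernel k f

/-- Every regular epimorphism is a normal epimorphism (a cokernel). -/
def RegEpisAreNormal (C : Type u) [Category.{v} C] [HasZeroMorphisms C] : Prop :=
  ∀ ⦃X Y : C⦄ (f : X ⟶ Y), Nonempty (RegularEpi f) →
    ∃ (K : C) (k : K ⟶ X), IsPCokernel k f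

/-- A normal category: pointed regular, every regular epi normal. -/
def NormalCat (C : Type u) [Category.{v} C] [HasZeroMorphisms C] : Prop :=
  StarReg.RegEpiMonoFactorisations C ∧ StarReg.RegEpisPullbackStable C ∧ RegEpisAreNormal C

/-- An internal equivalence relation. -/
def IsEquivRelPair {R X : C} (r1 r2 : R ⟶ X) : Prop :=
  (∀ ⦃W : C⦄ (u v : W ⟶ R), u ≫ r1 = v ≫ r1 → u ≫ r2 = v ≫ r2 → u = v) ∧
  (∃ d : X ⟶ R, d ≫ r1 = 𝟙 X ∧ d ≫ r2 = 𝟙 X) ∧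
  (∃ s : R ⟶ R, s ≫ r1 = r2 ∧ s ≫ r2 = r1) ∧
  (∀ ⦃P : C⦄ (p1 p2 : P ⟶ R), IsPullback p1 p2 r2 r1 →
    ∃ t : P ⟶ R, t ≫ r1 = p1 ≫ r1 ∧ t ≫ r2 = p2 ≫ r2)

/-- Barr-exactness: every equivalence relation is effective (a kernel pair). -/
def EquivRelsEffective (C : Type u) [Category.{v} C] : Prop :=
  ∀ ⦃R X : C⦄ (r1 r2 : R ⟶ X), IsEquivRelPair r1 r2 →
    ∃ (Y : C) (q : X ⟶ Y), IsPullback r1 r2 q q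

/-- Protomodularity in the pointed context: the split short five lemma. -/
def SplitShortFive (C : Type u) [Category.{v} C] [HasZeroMorphisms C] : Prop :=
  ∀ ⦃K A B K' A' B' : C⦄ (k : K ⟶ A) (p : A ⟶ B) (s : B ⟶ A)
    (k' : K' ⟶ A') (p' : A' ⟶ B') (s' : B' ⟶ A')
    (κ : K ⟶ K') (α : A ⟶ A') (β : B ⟶ B'),
    IsPKernel k p → IsPKernel k' p' → s ≫ p = 𝟙 B → s' ≫ p' = 𝟙 B' →
    k ≫ α = κ ≫ k' → p ≫ β = α ≫ p' → s ≫ α = β ≫ s' →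
    IsIso κ → IsIso β → IsIso α

/-- A semi-abelian category: pointed, regular, Barr-exact, protomodular
(with a zero object, finite limits and binary coproducts as instance hypotheses). -/
def SemiAbelianCat (C : Type u) [Category.{v} C] [HasZeroMorphisms C] : Prop :=
  StarReg.RegEpiMonoFactorisations C ∧ StarReg.RegEpisPullbackStable C ∧
    EquivRelsEffective C ∧ SplitShortFive C

end PtReg

/-!
Both isomorphisms are instances of the uniqueness of cokernels. The regular epimorphism `e` is
normal, say the cokernel of `m`; since `m ≫ l` is killed by `f`, it factors through the kernel `k`
of `f`, so `m` factors through `i` and `e` is also a cokernel of `i`. A map killing `l` kills `k`,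
so it factors through `f`, and the factor kills `f(L)`, so it factors through `q`: hence `f ≫ q` is
a cokernel of `l`.
-/

namespace PtReg

variable {C : Type u} [Category.{v} C] [HasZeroMorphisms C]

theorem IsPKernel.mono {K X Y : C} {k : K ⟶ X} {f : X ⟶ Y} (hk : IsPKernel k f) : Mono k where
  right_cancellation u v huv := by
    obtain ⟨w, -, hw⟩ := hk.2 (u ≫ k) (by rw [Category.assoc, hk.1, comp_zero])
    rw [hw u rfl, hw v huv.symm]

theorem IsPCokernel.epi {K X Q : C} {k : K ⟶ X} {q : X ⟶ Q} (hq : IsPCokernel k q) : Epi q where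
  left_cancellation u v huv := by
    obtain ⟨w, -, hw⟩ := hq.2 (q ≫ u) (by rw [← Category.assoc, hq.1, zero_comp])
    rw [hw u rfl, hw v huv.symm]

theorem IsPCokernel.exists_iso {K X Q Q' : C} {k : K ⟶ X} {q : X ⟶ Q} {q' : X ⟶ Q'}
    (hq : IsPCokernel k q) (hq' : IsPCokernel k q') : ∃ φ : Q ≅ Q', q ≫ φ.hom = q' := by
  have := hq.epi
  have := hq'.epi
  obtain ⟨φ, hφ, -⟩ := hq.2 q' hq'.1
  obtain ⟨ψ, hψ, -⟩ := hq'.2 q hq.1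
  refine ⟨⟨φ, ψ, ?_, ?_⟩, hφ⟩
  · exact (cancel_epi q).1 (by rw [reassoc_of% hφ, hψ, Category.comp_id])
  · exact (cancel_epi q').1 (by rw [reassoc_of% hψ, hφ, Category.comp_id])

theorem IsPKernel.of_isPCokernel {K X Y Q : C} {k : K ⟶ X} {w : X ⟶ Y} {f : X ⟶ Q}
    (hw : IsPKernel k w) (hf : IsPCokernel k f) : IsPKernel k f := by
  refine ⟨hf.1, fun L g hg => hw.2 g ?_⟩
  obtain ⟨w', hw', -⟩ := hf.2 w hw.1
  rw [← hw', ← Category.assoc, hg, zero_comp]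

theorem IsPCokernel.of_comp {M K X Q : C} {u : M ⟶ K} {i : K ⟶ X} {q : X ⟶ Q}
    (hq : IsPCokernel (u ≫ i) q) (hiq : i ≫ q = 0) : IsPCokernel i q :=
  ⟨hiq, fun _ h hh => hq.2 h (by rw [Category.assoc, hh, comp_zero])⟩

theorem IsPCokernel.epi_comp {K X Y Q : C} {n : X ⟶ Y} {q : Y ⟶ Q} (hq : IsPCokernel n q)
    (e : K ⟶ X) [Epi e] : IsPCokernel (e ≫ n) q :=
  ⟨by rw [Category.assoc, hq.1, comp_zero],
    fun _ h hh => hq.2 h ((cancel_epi e).1 (by rw [← Category.assoc, hh, comp_zero]))⟩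

theorem IsPCokernel.comp {K L A Q₁ Q₂ : C} {k : K ⟶ A} {l : L ⟶ A} {i : K ⟶ L}
    {f : A ⟶ Q₁} {q : Q₁ ⟶ Q₂} (hf : IsPCokernel k f) (hi : i ≫ l = k)
    (hq : IsPCokernel (l ≫ f) q) : IsPCokernel l (f ≫ q) := by
  have := hf.epi
  have := hq.epi
  refine ⟨by rw [← Category.assoc, hq.1], fun W h hlh => ?_⟩
  obtain ⟨h₁, hh₁, -⟩ := hf.2 h (by rw [← hi, Category.assoc, hlh, comp_zero])
  obtain ⟨h₂, hh₂, -⟩ := hq.2 h₁ (by rw [Category.assoc, hh₁, hlh])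
  refine ⟨h₂, by simp only [Category.assoc, hh₂, hh₁], fun h' hh' => ?_⟩
  exact (cancel_epi (f ≫ q)).1 (by rw [hh', Category.assoc, hh₂, hh₁])

theorem IsPCokernel.of_image {K L A Q F M : C} {k : K ⟶ A} {f : A ⟶ Q} (hkf : IsPKernel k f)
    {l : L ⟶ A} [Mono l] {i : K ⟶ L} (hi : i ≫ l = k) {e : L ⟶ F} {n : F ⟶ Q} [Mono n]
    (hfact : e ≫ n = l ≫ f) {m : M ⟶ L} (hm : IsPCokernel m e) : IsPCokernel i e := by
  have hie : i ≫ e = 0 :=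
    (cancel_mono n).1 (by rw [Category.assoc, hfact, ← Category.assoc, hi, hkf.1, zero_comp])
  obtain ⟨u, hu, -⟩ := hkf.2 (m ≫ l) (by rw [Category.assoc, ← hfact, ← Category.assoc, hm.1,
    zero_comp])
  have hmu : m = u ≫ i := (cancel_mono l).1 (by rw [Category.assoc, hi, hu])
  exact (hmu ▸ hm).of_comp hie

end PtReg

open CategoryTheory CategoryTheory.Limits StarReg PtReg in
theorem statement11_general {C : Type u} [Category.{v} C] [HasZeroMorphisms C]
    (hnc : NormalCat C)
    -- normal monos `k : K ⟶ A` and `l : L ⟶ A` with `K ⊆ L`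
    {K L A : C} (k : K ⟶ A) (hk : IsNormalMonoP k) (l : L ⟶ A) (hl : IsNormalMonoP l)
    (i : K ⟶ L) (hi : i ≫ l = k)
    -- the cokernel `f : A ⟶ QK` of `k`
    {QK : C} (f : A ⟶ QK) (hf : IsPCokernel k f)
    -- the regular image `f(L)`: `l ≫ f = e ≫ n`
    {FL : C} (e : L ⟶ FL) (n : FL ⟶ QK) (he : Nonempty (RegularEpi e)) (hn : Mono n)
    (hfact : e ≫ n = l ≫ f)
    -- the quotient `L/K`: cokernel of `i : K ⟶ L`
    {QLK : C} (qL : L ⟶ QLK) (hqL : IsPCokernel i qL)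
    -- the cokernel `g : A ⟶ QL` of `l`
    {QL : C} (g : A ⟶ QL) (hg : IsPCokernel l g)
    -- the quotient `(A/K)/f(L)`: cokernel of `n : FL ⟶ QK`
    {QQ : C} (q : QK ⟶ QQ) (hq : IsPCokernel n q) :
    (∃ φ : FL ≅ QLK, e ≫ φ.hom = qL) ∧ (∃ ψ : QL ≅ QQ, g ≫ ψ.hom = f ≫ q) := by
  obtain ⟨_, _, hl⟩ := hl
  have := hl.mono
  obtain ⟨_, _, hk⟩ := hk
  obtain ⟨M, m, hm⟩ := hnc.2.2 e he
  have := hm.epi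
  have hei : IsPCokernel i e := hm.of_image (hk.of_isPCokernel hf) hi hfact
  exact ⟨hei.exists_iso hqL, hg.exists_iso (hf.comp hi (hfact ▸ hq.epi_comp e))⟩

open CategoryTheory CategoryTheory.Limits StarReg PtReg in
/-- Double quotient isomorphism theorem in a normal category: for normal monos `K ⊆ L`
of `A`, `f(L) ≅ L/K` and `A/L ≅ (A/K)/(L/K)`. -/
theorem statement11 {C : Type u} [Category.{v} C] [HasZeroMorphisms C] [HasZeroObject C]
    (hfl : HasFiniteLimits C) (hnc : NormalCat C)
    -- normal monos `k : K ⟶ A` and `l : L ⟶ A` with `K ⊆ L`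
    {K L A : C} (k : K ⟶ A) (hk : IsNormalMonoP k) (l : L ⟶ A) (hl : IsNormalMonoP l)
    (i : K ⟶ L) (hi : i ≫ l = k)
    -- the cokernel `f : A ⟶ QK` of `k`
    {QK : C} (f : A ⟶ QK) (hf : IsPCokernel k f)
    -- the regular image `f(L)`: `l ≫ f = e ≫ n`
    {FL : C} (e : L ⟶ FL) (n : FL ⟶ QK) (he : Nonempty (RegularEpi e)) (hn : Mono n)
    (hfact : e ≫ n = l ≫ f)
    -- the quotient `L/K`: cokernel of `i : K ⟶ L`
    {QLK : C} (qL : L ⟶ QLK) (hqL : IsPCokernel i qL)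
    -- the cokernel `g : A ⟶ QL` of `l`
    {QL : C} (g : A ⟶ QL) (hg : IsPCokernel l g)
    -- the quotient `(A/K)/f(L)`: cokernel of `n : FL ⟶ QK`
    {QQ : C} (q : QK ⟶ QQ) (hq : IsPCokernel n q) :
    (∃ φ : FL ≅ QLK, e ≫ φ.hom = qL) ∧ (∃ ψ : QL ≅ QQ, g ≫ ψ.hom = f ≫ q) :=
  statement11_general hnc k hk l hl i hi f hf e n he hn hfact qL hqL g hg q hq
end

section
/- Let C be a star-regular category satisfying property (*). Given kernel stars κ : F* ⇉ A and σ : G* ⇉ U, and a monomorphism u : U → A such that (F* ∩ (U×U))* ⊆ G*, the star F* ∨ₐ G* ⇉ F* ∨ₐ U (obtained by asymmetric join along the coequaliser f of F*) is a kernel star, and (F* ∨ₐ U) / (F* ∨ₐ G*) ≅ U / G*. -/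
/-!
Restricting `F*` to `U` gives the kernel star of `e₁ : U ↠ f(U)` (star-pullbacks of kernel stars
are kernel stars), so `e₁` coequalises it and property (*) makes the image `H` of `G*` a kernel
star, of `w` say; its star-pullback `S` along `pI` is then the kernel star of `pI ≫ w`.

For the quotients: `U/G*` is also `f(U)/H`, because `H` is the image of `G*` along the epi `e₁`.
Moreover `pI` is a regular epi (a pullback of `f`) whose kernel lies in `S`, and `G*` maps into
`S` along the lift `U ⟶ P` of `(e₁, u)`; hence a morphism coequalising `S` descends to `f(U)`
and coequalises `H` there, i.e. `P ↠ f(U) ↠ U/G*` is a coequaliser of `S`.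
-/

open CategoryTheory CategoryTheory.Limits

universe v u

namespace StarReg

variable {C : Type u} [Category.{v} C]

variable {N : MorphismProperty C}

def Star.map (hN : IsIdealClass N) {X Y : C} (s : Star N X) (g : X ⟶ Y) : Star N Y :=
  ⟨s.T, s.a ≫ g, s.b ≫ g, hN.1 _ _ s.ha⟩

section Coequalizer

variable {X Q Q' : C} {s : Star N X} {q : X ⟶ Q} {q' : X ⟶ Q'}

noncomputable def IsStarCoequalizer.isColimit (h : IsStarCoequalizer s q) :
    IsColimit (Cofork.ofπ (f := s.a) (g := s.b) q h.1) :=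
  Cofork.IsColimit.mk _
    (fun c => (h.2 c.π c.condition).choose)
    (fun c => (h.2 c.π c.condition).choose_spec.1)
    (fun c m hm => (h.2 c.π c.condition).choose_spec.2 m hm)

noncomputable def IsStarCoequalizer.regularEpi (h : IsStarCoequalizer s q) : RegularEpi q :=
  ⟨s.T, s.a, s.b, h.1, h.isColimit⟩

lemma IsStarCoequalizer.epi (h : IsStarCoequalizer s q) : Epi q :=
  RegularEpi.epi q h.regularEpi

noncomputable def IsStarCoequalizer.uniqueUpToIso (h : IsStarCoequalizer s q)
    (h' : IsStarCoequalizer s q') : Q ≅ Q' :=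
  h.isColimit.coconePointUniqueUpToIso h'.isColimit

end Coequalizer

lemma StarLE.comp_eq {X Y : C} {s t : Star N X} (hst : StarLE s t) {h : X ⟶ Y}
    (ht : t.a ≫ h = t.b ≫ h) : s.a ≫ h = s.b ≫ h := by
  obtain ⟨m, hma, hmb⟩ := hst
  rw [← hma, ← hmb, Category.assoc, Category.assoc, ht]

lemma IsKernelStar.starLE {X Y : C} {f : X ⟶ Y} {s : Star N X} (hs : IsKernelStar f s)
    {t : Star N X} (ht : t.a ≫ f = t.b ≫ f) : StarLE t s :=
  let ⟨m, hm, _⟩ := hs.2 t ht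
  ⟨m, hm⟩

lemma IsKernelStar.of_comp_mono {X Y Z : C} {e : X ⟶ Y} {m : Y ⟶ Z} [Mono m] {s : Star N X}
    (hs : IsKernelStar (e ≫ m) s) : IsKernelStar e s := by
  have hcancel : ∀ {W : C} (x y : W ⟶ X), x ≫ e ≫ m = y ≫ e ≫ m ↔ x ≫ e = y ≫ e := by
    intro W x y
    simp only [← Category.assoc, cancel_mono]
  exact ⟨(hcancel _ _).1 hs.1, fun t ht => hs.2 t ((hcancel _ _).2 ht)⟩

lemma IsStarPullback.starLE {X Y : C} {g : X ⟶ Y} {τ : Star N Y} {σ : Star N X}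
    {j : σ.T ⟶ τ.T} (hσ : IsStarPullback g τ σ j) {ρ : Star N X} {w : ρ.T ⟶ τ.T}
    (ha : ρ.a ≫ g = w ≫ τ.a) (hb : ρ.b ≫ g = w ≫ τ.b) : StarLE ρ σ :=
  let ⟨h, ⟨hha, hhb, _⟩, _⟩ := hσ.2.2 ρ w ha hb
  ⟨h, hha, hhb⟩

lemma IsKernelStar.of_isStarPullback (hN : IsIdealClass N) {X Y Z : C} {w : Y ⟶ Z}
    {τ : Star N Y} (hτ : IsKernelStar w τ) {g : X ⟶ Y} {σ : Star N X} {j : σ.T ⟶ τ.T}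
    (hσ : IsStarPullback g τ σ j) : IsKernelStar (g ≫ w) σ := by
  obtain ⟨hσa, hσb, hσuniv⟩ := hσ
  refine ⟨by rw [reassoc_of% hσa, reassoc_of% hσb, hτ.1], fun t ht => ?_⟩
  obtain ⟨k, ⟨hka, hkb⟩, hk⟩ := hτ.2 (t.map hN g) (by simpa only [Star.map, Category.assoc])
  obtain ⟨h, ⟨hha, hhb, -⟩, hh⟩ := hσuniv t k hka.symm hkb.symm
  refine ⟨h, ⟨hha, hhb⟩, fun y ⟨hya, hyb⟩ => hh y ⟨hya, hyb, hk _ ⟨?_, ?_⟩⟩⟩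
  · change (y ≫ j) ≫ τ.a = t.a ≫ g
    rw [Category.assoc, ← hσa, ← Category.assoc, hya]
  · change (y ≫ j) ≫ τ.b = t.b ≫ g
    rw [Category.assoc, ← hσb, ← Category.assoc, hyb]

lemma IsKernelStar.isStarCoequalizer (hrc : RegEpisAreStarCoequalizers N) {X Y : C}
    {e : X ⟶ Y} (he : Nonempty (RegularEpi e)) {s : Star N X} (hs : IsKernelStar e s) :
    IsStarCoequalizer s e := by
  obtain ⟨s', hs'⟩ := hrc e he
  exact ⟨hs.1, fun _ h hh => hs'.2 h ((hs.starLE hs'.1).comp_eq hh)⟩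

lemma exists_comp_eq_of_kernel_le (hrc : RegEpisAreStarCoequalizers N) {P Y W : C} {p : P ⟶ Y}
    (hp : Nonempty (RegularEpi p)) {S : Star N P}
    (hpS : ∀ t : Star N P, t.a ≫ p = t.b ≫ p → StarLE t S) {h : P ⟶ W}
    (hh : S.a ≫ h = S.b ≫ h) : ∃ t : Y ⟶ W, p ≫ t = h := by
  obtain ⟨s, hs⟩ := hrc p hp
  obtain ⟨t, ht, -⟩ := hs.2 h ((hpS s hs.1).comp_eq hh)
  exact ⟨t, ht⟩

lemma IsImageFact.comp_eq_iff {X Y Z : C} {e : X ⟶ Y} {G : Star N X} {H : Star N Y}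
    (hH : IsImageFact e G H) (h : Y ⟶ Z) :
    H.a ≫ h = H.b ≫ h ↔ G.a ≫ e ≫ h = G.b ≫ e ≫ h := by
  obtain ⟨-, eH, ⟨heH⟩, hea, heb⟩ := hH
  have := RegularEpi.epi eH heH
  rw [← cancel_epi eH, reassoc_of% hea, reassoc_of% heb]

lemma IsStarCoequalizer.of_isImageFact {X Y Q : C} {e : X ⟶ Y} [Epi e] {G : Star N X}
    {H : Star N Y} (hH : IsImageFact e G H) {q : X ⟶ Q} (hq : IsStarCoequalizer G q)
    {r : Y ⟶ Q} (hr : e ≫ r = q) : IsStarCoequalizer H r := by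
  have := hq.epi
  have : Epi r := epi_of_epi_fac hr
  refine ⟨(hH.comp_eq_iff r).2 (by rw [hr, hq.1]), fun W h hh => ?_⟩
  obtain ⟨k, hk, -⟩ := hq.2 (e ≫ h) ((hH.comp_eq_iff h).1 hh)
  have hrk : r ≫ k = h := by rw [← cancel_epi e, ← Category.assoc, hr, hk]
  exact ⟨k, hrk, fun k' (hk' : r ≫ k' = h) => by rw [← cancel_epi r, hk', hrk]⟩

lemma IsStarCoequalizer.of_isStarPullback (hN : IsIdealClass N)
    (hrc : RegEpisAreStarCoequalizers N) {U P Y Q : C} {p : P ⟶ Y}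
    (hp : Nonempty (RegularEpi p)) {H : Star N Y} {S : Star N P} {j : S.T ⟶ H.T}
    (hS : IsStarPullback p H S j) (hpS : ∀ t : Star N P, t.a ≫ p = t.b ≫ p → StarLE t S)
    {v : U ⟶ P} {G : Star N U} (hH : IsImageFact (v ≫ p) G H) {r : Y ⟶ Q}
    (hr : IsStarCoequalizer H r) : IsStarCoequalizer S (p ≫ r) := by
  have := RegularEpi.epi p hp.some
  have := hr.epi
  refine ⟨by rw [reassoc_of% hS.1, reassoc_of% hS.2.1, hr.1], fun W h hh => ?_⟩
  obtain ⟨t, rfl⟩ := exists_comp_eq_of_kernel_le hrc hp hpS hh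
  have hGS : StarLE (G.map hN v) S := by
    obtain ⟨-, eH, -, hea, heb⟩ := hH
    exact hS.starLE (w := eH) (by simp [Star.map, hea]) (by simp [Star.map, heb])
  have hHt : H.a ≫ t = H.b ≫ t := by
    simpa only [hH.comp_eq_iff, Star.map, Category.assoc] using hGS.comp_eq hh
  obtain ⟨k, hk, -⟩ := hr.2 t hHt
  refine ⟨k, by simp only [Category.assoc, hk], fun k' hk' => ?_⟩
  rw [← cancel_epi r, hk, ← cancel_epi p, ← hk', Category.assoc]

end StarReg

open CategoryTheory CategoryTheory.Limits StarReg in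
theorem statement12_general {C : Type u} [Category.{v} C] (N : MorphismProperty C)
    (hsr : StarRegular N) (hps : PropertyStar N)
    -- the kernel star `F*` on `A` with coequaliser `f : A ⟶ QF`
    {A QF : C} (F : Star N A) (f : A ⟶ QF)
    (hFk : IsKernelStar f F) (hfc : IsStarCoequalizer F f)
    -- the mono `u : U ⟶ A` and the kernel star `G*` on `U`
    {U : C} (u : U ⟶ A)
    (G : Star N U) (hG : IsAKernelStar G)
    -- the restricted star `(F* ∩ (U×U))*` on `U`, contained in `G*`
    (R : Star N U) (jR : R.T ⟶ F.T) (hR : IsStarPullback u F R jR) (hRG : StarLE R G)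
    -- the regular image `f(U)`: `u ≫ f = e₁ ≫ n₁`
    {FU : C} (e₁ : U ⟶ FU) (n₁ : FU ⟶ QF) (he₁ : Nonempty (RegularEpi e₁)) (hn₁ : Mono n₁)
    (hfact : e₁ ≫ n₁ = u ≫ f)
    -- the asymmetric join `P = F* ∨ₐ U = f⁻¹(f(U))`
    {P : C} (pI : P ⟶ FU) (pA : P ⟶ A) (hP : IsPullback pI pA n₁ f)
    -- the image star `f'(G*)` on `f(U)` along `e₁`
    (H : Star N FU) (hH : IsImageFact e₁ G H)
    -- the star `S = F* ∨ₐ G*` on `P`: star-pullback of `H` along `pI`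
    (S : Star N P) (jS : S.T ⟶ H.T) (hS : IsStarPullback pI H S jS)
    -- the quotient `U/G*`
    {QU : C} (qU : U ⟶ QU) (hqU : IsStarCoequalizer G qU) :
    IsAKernelStar S ∧
    ∀ ⦃QP : C⦄ (qP : P ⟶ QP), IsStarCoequalizer S qP → Nonempty (QP ≅ QU) := by
  obtain ⟨hN, -, -, hpb, hrc⟩ := hsr
  have hRe : IsKernelStar e₁ R :=
    IsKernelStar.of_comp_mono (m := n₁) (hfact ▸ hFk.of_isStarPullback hN hR)
  have hRc : IsStarCoequalizer R e₁ := hRe.isStarCoequalizer hrc he₁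
  obtain ⟨W, w, hw⟩ := hps R G e₁ hRe hRc hG hRG H hH
  have hSk : IsKernelStar (pI ≫ w) S := hw.of_isStarPullback hN hS
  refine ⟨⟨W, pI ≫ w, hSk⟩, fun QP qP hqP => ?_⟩
  have := RegularEpi.epi e₁ he₁.some
  have hpI : Nonempty (RegularEpi pI) := hpb pI pA n₁ f hP ⟨hfc.regularEpi⟩
  obtain ⟨r, hr, -⟩ := hRc.2 qU (hRG.comp_eq hqU.1)
  have hSr : IsStarCoequalizer S (pI ≫ r) :=
    (hqU.of_isImageFact hH hr).of_isStarPullback hN hrc hpI hS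
      (fun t ht => hSk.starLE (by rw [reassoc_of% ht]))
      (by rwa [hP.lift_fst e₁ u hfact])
  exact ⟨hqP.uniqueUpToIso hSr⟩

open CategoryTheory CategoryTheory.Limits StarReg in
/-- In a star-regular category with property (*): for a kernel star `F*` on `A` with
coequaliser `f`, a kernel star `G*` on `U` and a mono `u : U ⟶ A` with
`(F* ∩ (U×U))* ⊆ G*`, the star `F* ∨ₐ G*` on `F* ∨ₐ U` is a kernel star and
`(F* ∨ₐ U)/(F* ∨ₐ G*) ≅ U/G*`. -/
theorem statement12 {C : Type u} [Category.{v} C] (N : MorphismProperty C)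
    (hfl : HasFiniteLimits C) (hsr : StarRegular N) (hps : PropertyStar N)
    -- the kernel star `F*` on `A` with coequaliser `f : A ⟶ QF`
    {A QF : C} (F : Star N A) (f : A ⟶ QF)
    (hFk : IsKernelStar f F) (hfc : IsStarCoequalizer F f)
    -- the mono `u : U ⟶ A` and the kernel star `G*` on `U`
    {U : C} (u : U ⟶ A) (hu : Mono u)
    (G : Star N U) (hG : IsAKernelStar G)
    -- the restricted star `(F* ∩ (U×U))*` on `U`, contained in `G*`
    (R : Star N U) (jR : R.T ⟶ F.T) (hR : IsStarPullback u F R jR) (hRG : StarLE R G)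
    -- the regular image `f(U)`: `u ≫ f = e₁ ≫ n₁`
    {FU : C} (e₁ : U ⟶ FU) (n₁ : FU ⟶ QF) (he₁ : Nonempty (RegularEpi e₁)) (hn₁ : Mono n₁)
    (hfact : e₁ ≫ n₁ = u ≫ f)
    -- the asymmetric join `P = F* ∨ₐ U = f⁻¹(f(U))`
    {P : C} (pI : P ⟶ FU) (pA : P ⟶ A) (hP : IsPullback pI pA n₁ f)
    -- the image star `f'(G*)` on `f(U)` along `e₁`
    (H : Star N FU) (hH : IsImageFact e₁ G H)
    -- the star `S = F* ∨ₐ G*` on `P`: star-pullback of `H` along `pI`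
    (S : Star N P) (jS : S.T ⟶ H.T) (hS : IsStarPullback pI H S jS)
    -- the quotient `U/G*`
    {QU : C} (qU : U ⟶ QU) (hqU : IsStarCoequalizer G qU) :
    IsAKernelStar S ∧
    ∀ ⦃QP : C⦄ (qP : P ⟶ QP), IsStarCoequalizer S qP → Nonempty (QP ≅ QU) :=
  statement12_general N hsr hps F f hFk hfc u G hG R jR hR hRG e₁ n₁ he₁ hn₁ hfact pI pA hP H hH S
    jS hS qU hqU
end
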